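/- Let m be a positive integer and θ, φ, γ : Fin m → ℝ. Let E = blockdiag_j(X_{0,2}) (a 3m×3m matrix) and let I denote the 3m×3m identity. Then for a = Y02 and also for a = Z02: diag₃(D_a(θ), D_a(θ), D_a(θ)) · diag₃(I, E, I) · diag₃(D_a(φ), D_a(φ), D_a(φ)) · diag₃(I, E, I) · diag₃(I, I, E) · diag₃(D_a(γ), D_a(γ), D_a(γ)) · diag₃(I, I, E) = diag₃(D_a(θ+φ+γ), D_a(θ−φ+γ), D_a(θ+φ−γ)), where θ±φ±γ denotes the componentwise combination of the angle families. -/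

import Mathlib

open Matrix

/-- `e^{ι x}` for a real angle `x`. -/
noncomputable def eC (x : ℝ) : ℂ := Complex.exp (x * Complex.I)

noncomputable def RX01 (θ : ℝ) : Matrix (Fin 3) (Fin 3) ℂ :=
  !![(Real.cos θ : ℂ), (Real.sin θ : ℂ) * Complex.I, 0;
     (Real.sin θ : ℂ) * Complex.I, (Real.cos θ : ℂ), 0;
     0, 0, 1]

noncomputable def RX12 (θ : ℝ) : Matrix (Fin 3) (Fin 3) ℂ :=
  !![1, 0, 0;
     0, (Real.cos θ : ℂ), (Real.sin θ : ℂ) * Complex.I;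
     0, (Real.sin θ : ℂ) * Complex.I, (Real.cos θ : ℂ)]

noncomputable def RX02 (θ : ℝ) : Matrix (Fin 3) (Fin 3) ℂ :=
  !![(Real.cos θ : ℂ), 0, (Real.sin θ : ℂ) * Complex.I;
     0, 1, 0;
     (Real.sin θ : ℂ) * Complex.I, 0, (Real.cos θ : ℂ)]

noncomputable def RY01 (θ : ℝ) : Matrix (Fin 3) (Fin 3) ℂ :=
  !![(Real.cos θ : ℂ), (Real.sin θ : ℂ), 0;
     (-Real.sin θ : ℂ), (Real.cos θ : ℂ), 0;
     0, 0, 1]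

noncomputable def RY12 (θ : ℝ) : Matrix (Fin 3) (Fin 3) ℂ :=
  !![1, 0, 0;
     0, (Real.cos θ : ℂ), (Real.sin θ : ℂ);
     0, (-Real.sin θ : ℂ), (Real.cos θ : ℂ)]

noncomputable def RY02 (θ : ℝ) : Matrix (Fin 3) (Fin 3) ℂ :=
  !![(Real.cos θ : ℂ), 0, (Real.sin θ : ℂ);
     0, 1, 0;
     (-Real.sin θ : ℂ), 0, (Real.cos θ : ℂ)]

noncomputable def RZ01 (θ : ℝ) : Matrix (Fin 3) (Fin 3) ℂ :=
  !![eC θ, 0, 0; 0, eC (-θ), 0; 0, 0, 1]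

noncomputable def RZ12 (θ : ℝ) : Matrix (Fin 3) (Fin 3) ℂ :=
  !![1, 0, 0; 0, eC θ, 0; 0, 0, eC (-θ)]

noncomputable def RZ02 (θ : ℝ)  : Matrix (Fin 3) (Fin 3) ℂ :=
  !![eC θ, 0, 0; 0, 1, 0; 0, 0, eC (-θ)]

/-- Block diagonal matrix built from a one-qutrit gate family `R` applied to angles `α`. -/
noncomputable def D {m : ℕ} (R : ℝ → Matrix (Fin 3) (Fin 3) ℂ) (α : Fin m → ℝ) :
    Matrix (Fin 3 × Fin m) (Fin 3 × Fin m) ℂ :=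
  Matrix.blockDiagonal fun j => R (α j)

/-- Block diagonal matrix with three equal-size diagonal blocks. -/
noncomputable def diag3 {I : Type*} [DecidableEq I] (A B C : Matrix I I ℂ) :
    Matrix (I × Fin 3) (I × Fin 3) ℂ :=
  Matrix.blockDiagonal ![A, B, C]

noncomputable def X01 : Matrix (Fin 3) (Fin 3) ℂ := !![0, 1, 0; 1, 0, 0; 0, 0, 1]
noncomputable def X12 : Matrix (Fin 3) (Fin 3) ℂ := !![1, 0, 0; 0, 0, 1; 0, 1, 0]
noncomputable def X02 : Matrix (Fin 3) (Fin 3) ℂ := !![0, 0, 1; 0, 1, 0; 1, 0, 0]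
noncomputable def Xp1 : Matrix (Fin 3) (Fin 3) ℂ := !![0, 0, 1; 1, 0, 0; 0, 1, 0]
noncomputable def Xp2 : Matrix (Fin 3) (Fin 3) ℂ := !![0, 1, 0; 0, 0, 1; 1, 0, 0]

/-! Everything is block diagonal, so the identity holds block by block. The rotations
`R_{Y02}` and `R_{Z02}` are one-parameter groups, `R a * R b = R (a + b)`, and conjugation by
`X_{0,2}` reverses the angle, `X * R a * X = R (-a)`; so a block that sandwiches `D φ` (resp.
`D γ`) between two copies of `E` contributes `-φ` (resp. `-γ`). -/

lemma eC_add (a b : ℝ) : eC (a + b) = eC a * eC b := by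
  simp only [eC, Complex.ofReal_add, add_mul, Complex.exp_add]

lemma RY02_mul_RY02 (a b : ℝ) : RY02 a * RY02 b = RY02 (a + b) := by
  ext i j
  fin_cases i <;> fin_cases j <;>
    simp [RY02, mul_apply, Fin.sum_univ_three, Real.cos_add, Real.sin_add] <;> ring

lemma RZ02_mul_RZ02 (a b : ℝ) : RZ02 a * RZ02 b = RZ02 (a + b) := by
  ext i j
  fin_cases i <;> fin_cases j <;> simp [RZ02, mul_apply, Fin.sum_univ_three, eC_add, mul_comm]

lemma X02_mul_RY02_mul_X02 (a : ℝ) : X02 * RY02 a * X02 = RY02 (-a) := by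
  ext i j
  fin_cases i <;> fin_cases j <;> simp [X02, RY02, mul_apply, Fin.sum_univ_three]

lemma X02_mul_RZ02_mul_X02 (a : ℝ) : X02 * RZ02 a * X02 = RZ02 (-a) := by
  ext i j
  fin_cases i <;> fin_cases j <;> simp [X02, RZ02, mul_apply, Fin.sum_univ_three]

lemma diag3_mul_diag3 {I : Type*} [Fintype I] [DecidableEq I] (A B C A' B' C' : Matrix I I ℂ) :
    diag3 A B C * diag3 A' B' C' = diag3 (A * A') (B * B') (C * C') := by
  rw [diag3, diag3, diag3, ← blockDiagonal_mul]
  congr 1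
  ext k : 1
  fin_cases k <;> rfl

section OneParameterGroup

variable {m : ℕ} {R : ℝ → Matrix (Fin 3) (Fin 3) ℂ}

lemma D_mul_D (hmul : ∀ a b, R a * R b = R (a + b)) (α β : Fin m → ℝ) :
    D R α * D R β = D R (α + β) := by
  simp only [D, ← blockDiagonal_mul, hmul, Pi.add_apply]

lemma blockDiagonal_mul_D_mul_blockDiagonal {X : Matrix (Fin 3) (Fin 3) ℂ}
    (hconj : ∀ a, X * R a * X = R (-a)) (α : Fin m → ℝ) :
    blockDiagonal (fun _ : Fin m => X) * D R α * blockDiagonal (fun _ : Fin m => X) =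
      D R (-α) := by
  simp only [D, ← blockDiagonal_mul, hconj, Pi.neg_apply]

lemma diag3_circuit_eq {X : Matrix (Fin 3) (Fin 3) ℂ}
    (hmul : ∀ a b, R a * R b = R (a + b)) (hconj : ∀ a, X * R a * X = R (-a))
    (θ φ γ : Fin m → ℝ) :
    let E : Matrix (Fin 3 × Fin m) (Fin 3 × Fin m) ℂ := blockDiagonal fun _ : Fin m => X
    diag3 (D R θ) (D R θ) (D R θ) * diag3 1 E 1 * diag3 (D R φ) (D R φ) (D R φ) *
      diag3 1 E 1 * diag3 1 1 E * diag3 (D R γ) (D R γ) (D R γ) * diag3 1 1 E =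
      diag3 (D R (θ + φ + γ)) (D R (θ - φ + γ)) (D R (θ + φ - γ)) := by
  intro E
  simp only [diag3_mul_diag3, mul_one]
  have hE : ∀ α, E * D R α * E = D R (-α) := blockDiagonal_mul_D_mul_blockDiagonal hconj
  congr 1
  · rw [D_mul_D hmul, D_mul_D hmul]
  · calc D R θ * E * D R φ * E * D R γ = D R θ * (E * D R φ * E) * D R γ := by
          simp only [mul_assoc]
      _ = D R (θ - φ + γ) := by rw [hE, D_mul_D hmul, D_mul_D hmul, sub_eq_add_neg]
  · calc D R θ * D R φ * E * D R γ * E = D R θ * D R φ * (E * D R γ * E) := by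
          simp only [mul_assoc]
      _ = D R (θ + φ - γ) := by rw [hE, D_mul_D hmul, D_mul_D hmul, sub_eq_add_neg]

end OneParameterGroup

theorem stmt10_general (m : ℕ) (θ φ γ : Fin m → ℝ) :
    let E : Matrix (Fin 3 × Fin m) (Fin 3 × Fin m) ℂ :=
      Matrix.blockDiagonal fun _ : Fin m => X02
    let I : Matrix (Fin 3 × Fin m) (Fin 3 × Fin m) ℂ := 1
    diag3 (D RY02 θ) (D RY02 θ) (D RY02 θ) * diag3 I E I *
      diag3 (D RY02 φ) (D RY02 φ) (D RY02 φ) * diag3 I E I * diag3 I I E *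
      diag3 (D RY02 γ) (D RY02 γ) (D RY02 γ) * diag3 I I E =
      diag3 (D RY02 (fun j => θ j + φ j + γ j)) (D RY02 (fun j => θ j - φ j + γ j))
        (D RY02 (fun j => θ j + φ j - γ j)) ∧
    diag3 (D RZ02 θ) (D RZ02 θ) (D RZ02 θ) * diag3 I E I *
      diag3 (D RZ02 φ) (D RZ02 φ) (D RZ02 φ) * diag3 I E I * diag3 I I E *
      diag3 (D RZ02 γ) (D RZ02 γ) (D RZ02 γ) * diag3 I I E =
      diag3 (D RZ02 (fun j => θ j + φ j + γ j)) (D RZ02 (fun j => θ j - φ j + γ j))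
        (D RZ02 (fun j => θ j + φ j - γ j)) :=
  ⟨diag3_circuit_eq RY02_mul_RY02 X02_mul_RY02_mul_X02 θ φ γ,
    diag3_circuit_eq RZ02_mul_RZ02 X02_mul_RZ02_mul_X02 θ φ γ⟩

theorem stmt10 (m : ℕ) (hm : 0 < m) (θ φ γ : Fin m → ℝ) :
    let E : Matrix (Fin 3 × Fin m) (Fin 3 × Fin m) ℂ :=
      Matrix.blockDiagonal fun _ : Fin m => X02
    let I : Matrix (Fin 3 × Fin m) (Fin 3 × Fin m) ℂ := 1
    diag3 (D RY02 θ) (D RY02 θ) (D RY02 θ) * diag3 I E I *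
      diag3 (D RY02 φ) (D RY02 φ) (D RY02 φ) * diag3 I E I * diag3 I I E *
      diag3 (D RY02 γ) (D RY02 γ) (D RY02 γ) * diag3 I I E =
      diag3 (D RY02 (fun j => θ j + φ j + γ j)) (D RY02 (fun j => θ j - φ j + γ j))
        (D RY02 (fun j => θ j + φ j - γ j)) ∧
    diag3 (D RZ02 θ) (D RZ02 θ) (D RZ02 θ) * diag3 I E I *
      diag3 (D RZ02 φ) (D RZ02 φ) (D RZ02 φ) * diag3 I E I * diag3 I I E *
      diag3 (D RZ02 γ) (D RZ02 γ) (D RZ02 γ) * diag3 I I E =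
      diag3 (D RZ02 (fun j => θ j + φ j + γ j)) (D RZ02 (fun j => θ j - φ j + γ j))
        (D RZ02 (fun j => θ j + φ j - γ j)) :=
  stmt10_general m θ φ γ
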